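/- Let D be a completed (possibly infinite) derivation in the coinductive system EQ∞ with conclusion ()M = ()N, for infinite λ-terms M and N that are strongly regular (each has a finite set of generated subterms under the scope⁺-decomposition ARS). Then only finitely many distinct equations occur in D, and consequently every infinite thread in D contains a repetition of an equation. -/

import Mathlib

/-- Node labels of (nameless, de Bruijn) infinite λ-terms. -/
inductive Lab : Type
  | lam : Lab
  | app : Lab
  | var : ℕ → Lab
deriving DecidableEq

/-- Which child positions a node with a given label may have. -/
def okChild : Lab → Bool → Prop
  | .lam, false => True
  | .app, _ => True
  | _, _ => False

/-- Infinite λ-terms (in nameless de Bruijn style), represented as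
labelled possibly-infinite binary trees given by their labelling function. -/
structure Tm : Type where
  lab : List Bool → Option Lab
  root : (lab []).isSome
  cons : ∀ p b, (lab (p ++ [b])).isSome ↔ ∃ l, lab p = some l ∧ okChild l b

namespace Tm

/-- Subterm at a position. -/
def sub (t : Tm) (p : List Bool) (h : (t.lab p).isSome) : Tm where
  lab q := t.lab (p ++ q)
  root := by simpa using h
  cons q b := by
    have h' := t.cons (p ++ q) b
    simpa [List.append_assoc] using h'

/-- Auxiliary: number of λ-labels strictly above, accumulating the prefix. -/
def ldepthAux (t : Tm) : List Bool → List Bool → ℕ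
  | _, [] => 0
  | pre, b :: p => (if t.lab pre = some .lam then 1 else 0) + t.ldepthAux (pre ++ [b]) p

/-- The number of λ-nodes strictly above position `p` in `t`. -/
def ldepth (t : Tm) (p : List Bool) : ℕ := t.ldepthAux [] p

end Tm

def shiftLab (σ : ℕ → ℕ) : Lab → Lab
  | .var k => .var (σ k)
  | l => l

theorem okChild_shiftLab (σ : ℕ → ℕ) (l : Lab) (b : Bool) :
    okChild (shiftLab σ l) b ↔ okChild l b := by
  cases l <;> cases b <;> simp [shiftLab, okChild]

/-- Relabel all variable nodes, depending on their λ-depth. -/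
def Tm.mapVar (t : Tm) (σ : ℕ → ℕ → ℕ) : Tm where
  lab p := (t.lab p).map (shiftLab (σ (t.ldepth p)))
  root := by
    have h := t.root
    cases hl : t.lab [] with
    | none => rw [hl] at h; simp at h
    | some l => simp [hl]
  cons p b := by
    constructor
    · intro hs
      have hs' : (t.lab (p ++ [b])).isSome := by simpa using hs
      obtain ⟨l', hl', hok⟩ := (t.cons p b).1 hs'
      exact ⟨shiftLab (σ (t.ldepth p)) l', by simp [hl'],
        (okChild_shiftLab _ _ _).2 hok⟩
    · rintro ⟨l', hl', hok⟩
      obtain ⟨l, hl, hfl⟩ := Option.map_eq_some_iff.mp (by simpa using hl')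
      have hok' : okChild l b := by
        have := hfl ▸ hok
        exact (okChild_shiftLab (σ (t.ldepth p)) l b).1 this
      have hs : (t.lab (p ++ [b])).isSome := (t.cons p b).2 ⟨l, hl, hok'⟩
      simpa using hs

/-- The term consisting of a single variable node with index 0. -/
def var0Tm : Tm where
  lab p := if p = [] then some (.var 0) else none
  root := by simp
  cons p b := by
    constructor
    · intro h
      simp only [List.append_eq_nil_iff] at h
      simp at h
    · rintro ⟨l, hl, hok⟩
      by_cases hp : p = []
      · subst hp
        simp only [if_pos rfl, Option.some.injEq] at hl
        cases hl
        cases b <;> simp [okChild] at hok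
      · simp [hp] at hl

/-- The last-but-`j` abstraction-prefix variable occurs in `t`
(at λ-depth `d` inside the term it has de Bruijn index `j + d`). -/
def OccursJ (j : ℕ) (t : Tm) : Prop := ∃ p, t.lab p = some (.var (j + t.ldepth p))

/-- Remove the prefix variable with base index `j` from the de Bruijn indexing. -/
def downJ (j : ℕ) (t : Tm) : Tm := t.mapVar (fun d k => if j + d < k then k - 1 else k)

/-- The last abstraction-prefix variable occurs. -/
def occurs0 : Tm → Prop := OccursJ 0

/-- Remove the (vacuous) last abstraction-prefix variable. -/
def down0 : Tm → Tm := downJ 0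

/-- `t` has no free variables pointing outside the term itself. -/
def ClosedTm (t : Tm) : Prop := ∀ p k, t.lab p = some (.var k) → k < t.ldepth p

/-- Sequents: a prefix length together with an infinite λ-term. -/
abbrev TSeq : Type := ℕ × Tm

/-- λ-decomposition step of the ARS `Reg⁺`. -/
def SLam (s s' : TSeq) : Prop :=
  s.2.lab [] = some .lam ∧ s'.1 = s.1 + 1 ∧
    ∃ h : (s.2.lab [false]).isSome, s'.2 = s.2.sub [false] h

/-- Left application-decomposition step. -/
def SApp0 (s s' : TSeq) : Prop :=
  s.2.lab [] = some .app ∧ s'.1 = s.1 ∧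
    ∃ h : (s.2.lab [false]).isSome, s'.2 = s.2.sub [false] h

/-- Right application-decomposition step. -/
def SApp1 (s s' : TSeq) : Prop :=
  s.2.lab [] = some .app ∧ s'.1 = s.1 ∧
    ∃ h : (s.2.lab [true]).isSome, s'.2 = s.2.sub [true] h

/-- Vacuous-prefix removal step (removal of the last prefix variable). -/
def SDel (s s' : TSeq) : Prop :=
  s.1 = s'.1 + 1 ∧ ¬ occurs0 s.2 ∧ s'.2 = down0 s.2

/-- The scope⁺-decomposition ARS `Reg⁺` on prefixed infinite λ-terms. -/
def Step (s s' : TSeq) : Prop := SLam s s' ∨ SApp0 s s' ∨ SApp1 s s' ∨ SDel s s'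

/-- A (scope⁺-delimiting) strategy for the ARS `Reg⁺`: a sub-ARS with the
same objects and the same normal forms. -/
def Strategy (S : TSeq → TSeq → Prop) : Prop :=
  (∀ a b, S a b → Step a b) ∧ (∀ a, (∃ b, Step a b) → ∃ b, S a b)

/-- An infinite λ-term is strongly regular if some scope⁺-delimiting strategy
reaches only finitely many sequents from it. -/
def StronglyRegular (M : Tm) : Prop :=
  ∃ S : TSeq → TSeq → Prop, Strategy S ∧ {s | Relation.ReflTransGen S (0, M) s}.Finite

/-- Equations between prefixed infinite λ-terms. -/
abbrev Eqn : Type := TSeq × TSeq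

/-- Local correctness for the coinductive proof system `EQ∞`: the equation `e`
is the conclusion of a rule instance (axiom, λ, @, del) with premises `ps`. -/
def LocalRule (e : Eqn) (ps : List Eqn) : Prop :=
  (ps = [] ∧ 1 ≤ e.1.1 ∧ 1 ≤ e.2.1 ∧ e.1.2 = var0Tm ∧ e.2.2 = var0Tm) ∨
  (∃ (ht : (e.1.2.lab [false]).isSome) (hu : (e.2.2.lab [false]).isSome),
    e.1.2.lab [] = some .lam ∧ e.2.2.lab [] = some .lam ∧
    ps = [((e.1.1 + 1, e.1.2.sub [false] ht), (e.2.1 + 1, e.2.2.sub [false] hu))]) ∨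
  (∃ (ht0 : (e.1.2.lab [false]).isSome) (ht1 : (e.1.2.lab [true]).isSome)
     (hu0 : (e.2.2.lab [false]).isSome) (hu1 : (e.2.2.lab [true]).isSome),
    e.1.2.lab [] = some .app ∧ e.2.2.lab [] = some .app ∧
    ps = [((e.1.1, e.1.2.sub [false] ht0), (e.2.1, e.2.2.sub [false] hu0)),
          ((e.1.1, e.1.2.sub [true] ht1), (e.2.1, e.2.2.sub [true] hu1))]) ∨
  (∃ n m, e.1.1 = n + 1 ∧ e.2.1 = m + 1 ∧ ¬ occurs0 e.1.2 ∧ ¬ occurs0 e.2.2 ∧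
    ps = [((n, down0 e.1.2), (m, down0 e.2.2))])

/-- A completed (possibly infinite) derivation in `EQ∞`: a rooted tree of
nodes labelled by equations, locally correct at every node (in particular
every leaf is an axiom), all of whose nodes are reachable from the root. -/
structure CompletedEqDeriv where
  Node : Type
  root : Node
  label : Node → Eqn
  children : Node → List Node
  ok : ∀ v, LocalRule (label v) ((children v).map label)
  reach : ∀ v, Relation.ReflTransGen (fun a b => b ∈ children a) root v

/- Each premise of an `EQ∞` rule arises from its conclusion by one and the same kind of
`Reg⁺` step on both sides; since a derivation is reachable from its root, every equation in
it pairs a sequent generated from the left root with one generated from the right root,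
and strong regularity makes both supplies finite; pigeonhole along a thread then gives a
repetition. -/

theorem LocalRule.step_of_mem {e : Eqn} {ps : List Eqn} (h : LocalRule e ps) :
    ∀ p ∈ ps, Step e.1 p.1 ∧ Step e.2 p.2 := by
  rcases h with ⟨rfl, -⟩ | ⟨ht, hu, hlt, hlu, rfl⟩ |
      ⟨ht0, ht1, hu0, hu1, hlt, hlu, rfl⟩ | ⟨n, m, hn, hm, hot, hou, rfl⟩
  · simp
  · simp only [List.mem_singleton, forall_eq]
    exact ⟨Or.inl ⟨hlt, rfl, ht, rfl⟩, Or.inl ⟨hlu, rfl, hu, rfl⟩⟩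
  · simp only [List.mem_cons, List.not_mem_nil, or_false, forall_eq_or_imp, forall_eq]
    exact ⟨⟨Or.inr (Or.inl ⟨hlt, rfl, ht0, rfl⟩),
        Or.inr (Or.inl ⟨hlu, rfl, hu0, rfl⟩)⟩,
      Or.inr (Or.inr (Or.inl ⟨hlt, rfl, ht1, rfl⟩)),
      Or.inr (Or.inr (Or.inl ⟨hlu, rfl, hu1, rfl⟩))⟩
  · simp only [List.mem_singleton, forall_eq]
    exact ⟨Or.inr (Or.inr (Or.inr ⟨hn, hot, rfl⟩)),
      Or.inr (Or.inr (Or.inr ⟨hm, hou, rfl⟩))⟩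

namespace CompletedEqDeriv

variable (D : CompletedEqDeriv)

theorem label_reachable (v : D.Node) :
    Relation.ReflTransGen Step (D.label D.root).1 (D.label v).1 ∧
      Relation.ReflTransGen Step (D.label D.root).2 (D.label v).2 := by
  induction D.reach v with
  | refl => exact ⟨.refl, .refl⟩
  | @tail u w _ hw ih =>
    have hstep := (D.ok u).step_of_mem (D.label w) (List.mem_map_of_mem hw)
    exact ⟨ih.1.tail hstep.1, ih.2.tail hstep.2⟩

theorem finite_labels
    (hfst : {s | Relation.ReflTransGen Step (D.label D.root).1 s}.Finite)
    (hsnd : {s | Relation.ReflTransGen Step (D.label D.root).2 s}.Finite) :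
    {e : Eqn | ∃ v, D.label v = e}.Finite :=
  (hfst.prod hsnd).subset <| by
    rintro _ ⟨v, rfl⟩
    exact D.label_reachable v

end CompletedEqDeriv

theorem stmt13_general (M N : Tm)
    (hfM : {s | Relation.ReflTransGen Step ((0 : ℕ), M) s}.Finite)
    (hfN : {s | Relation.ReflTransGen Step ((0 : ℕ), N) s}.Finite)
    (D : CompletedEqDeriv) (hroot : D.label D.root = (((0 : ℕ), M), ((0 : ℕ), N))) :
    {e : Eqn | ∃ v, D.label v = e}.Finite ∧
    ∀ f : ℕ → D.Node, f 0 = D.root → (∀ i, f (i + 1) ∈ D.children (f i)) →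
      ∃ i j, i < j ∧ D.label (f i) = D.label (f j) := by
  have hfin : {e : Eqn | ∃ v, D.label v = e}.Finite :=
    D.finite_labels (by rwa [hroot]) (by rwa [hroot])
  exact ⟨hfin, fun f _ _ =>
    hfin.exists_lt_map_eq_of_forall_mem fun i =>
      (⟨f i, rfl⟩ : ∃ v, D.label v = D.label (f i))⟩

/-- If `M` and `N` are strongly regular (finitely many
generated subterms under the scope⁺-decomposition ARS), then any completed
`EQ∞`-derivation of `() M = () N` contains only finitely many distinct
equations, and consequently every infinite thread in it repeats an equation. -/
theorem stmt13 (M N : Tm) (hM : ClosedTm M) (hN : ClosedTm N)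
    (hfM : {s | Relation.ReflTransGen Step ((0 : ℕ), M) s}.Finite)
    (hfN : {s | Relation.ReflTransGen Step ((0 : ℕ), N) s}.Finite)
    (D : CompletedEqDeriv) (hroot : D.label D.root = (((0 : ℕ), M), ((0 : ℕ), N))) :
    {e : Eqn | ∃ v, D.label v = e}.Finite ∧
    ∀ f : ℕ → D.Node, f 0 = D.root → (∀ i, f (i + 1) ∈ D.children (f i)) →
      ∃ i j, i < j ∧ D.label (f i) = D.label (f j) :=
  stmt13_general M N hfM hfN D hroot
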